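/- Let \Delta be the coproduct on Z\langle a,b\rangle determined by \Delta(1)=0, \Delta(a)=\Delta(b)=1\otimes 1 and the Newtonian condition \Delta(uv) = \sum u_{(1)} \otimes u_{(2)}v + \sum uv_{(1)} \otimes v_{(2)}. Then for an ab-monomial u = u_1...u_n, \Delta(u) = \sum_{i=1}^n u_1...u_{i-1} \otimes u_{i+1}...u_n, and \Delta is coassociative. -/

import Mathlib

/-!
Peeling off the first letter, the Newtonian condition gives `Δ(xu) = 1 ⊗ u + (x ⊗ 1) Δ(u)`
(and `Δ(1) = 0`, from `u = v = 1`), which is the recursion satisfied by the sum of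
single-letter deletions. With that formula, both `(Δ ⊗ id) Δ` and `(id ⊗ Δ) Δ` send a monomial
to the sum, over pairs of positions `j < i`, of the threefold tensor obtained by deleting the
letters at `j` and `i`; by linearity, agreeing on monomials is enough.
-/

open TensorProduct

/-- The ring `ℤ⟨a,b⟩`, realized as the monoid algebra of the free monoid on two
letters (`false` encodes `a`, `true` encodes `b`). -/
abbrev AB : Type := MonoidAlgebra ℤ (FreeMonoid Bool)

/-- The variable `a`. -/
noncomputable def aV : AB := MonoidAlgebra.single (FreeMonoid.ofList [false]) 1

/-- The variable `b`. -/
noncomputable def bV : AB := MonoidAlgebra.single (FreeMonoid.ofList [true]) 1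

open Finset

section Newtonian

variable {R A : Type*} [CommSemiring R] [Ring A] [Algebra R A]

def IsNewtonian (D : A →ₗ[R] A ⊗[R] A) : Prop :=
  ∀ u v : A, D (u * v) = D u * (1 ⊗ₜ[R] v) + (u ⊗ₜ[R] 1) * D v

theorem IsNewtonian.map_one_eq_zero {D : A →ₗ[R] A ⊗[R] A} (hD : IsNewtonian D) : D 1 = 0 := by
  have h := hD 1 1
  rw [mul_one, Algebra.TensorProduct.one_def.symm, one_mul, mul_one] at h
  exact left_eq_add.mp h

end Newtonian

section FreeMonoidAlgebra

variable {R α : Type*} [CommSemiring R]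

noncomputable def word (l : List α) : MonoidAlgebra R (FreeMonoid α) :=
  MonoidAlgebra.single (FreeMonoid.ofList l) 1

theorem word_nil : (word [] : MonoidAlgebra R (FreeMonoid α)) = 1 := rfl

theorem word_append (l₁ l₂ : List α) :
    (word (l₁ ++ l₂) : MonoidAlgebra R (FreeMonoid α)) = word l₁ * word l₂ := by
  rw [word, word, word, MonoidAlgebra.single_mul_single, one_mul]
  rfl

noncomputable def deletionSum (l : List α) :
    MonoidAlgebra R (FreeMonoid α) ⊗[R] MonoidAlgebra R (FreeMonoid α) :=
  ∑ i ∈ range l.length, word (l.take i) ⊗ₜ word (l.drop (i + 1))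

theorem deletionSum_cons (x : α) (l : List α) :
    (deletionSum (x :: l) : MonoidAlgebra R (FreeMonoid α) ⊗[R] _) =
      1 ⊗ₜ word l + (word [x] ⊗ₜ 1) * deletionSum l := by
  rw [deletionSum, deletionSum, List.length_cons, sum_range_succ', mul_sum, add_comm]
  simp only [Algebra.TensorProduct.tmul_mul_tmul, one_mul, ← word_append]
  rfl

theorem deletionSum_take {l : List α} {i : ℕ} (hi : i ≤ l.length) :
    (deletionSum (l.take i) : MonoidAlgebra R (FreeMonoid α) ⊗[R] _) =
      ∑ j ∈ range i, word (l.take j) ⊗ₜ word ((l.take i).drop (j + 1)) := by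
  rw [deletionSum, List.length_take_of_le hi]
  refine sum_congr rfl fun j hj => ?_
  rw [List.take_take, min_eq_left (mem_range.mp hj).le]

theorem deletionSum_drop (l : List α) (j : ℕ) :
    (deletionSum (l.drop j) : MonoidAlgebra R (FreeMonoid α) ⊗[R] _) =
      ∑ i ∈ Ico j l.length, word ((l.take i).drop j) ⊗ₜ word (l.drop (i + 1)) := by
  rw [deletionSum, sum_Ico_eq_sum_range, List.length_drop]
  refine sum_congr rfl fun k _ => ?_
  rw [List.drop_take, List.drop_drop, Nat.add_sub_cancel_left, add_assoc]

theorem coassoc_of_apply_word_eq_deletionSum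
    {D : MonoidAlgebra R (FreeMonoid α) →ₗ[R]
      MonoidAlgebra R (FreeMonoid α) ⊗[R] MonoidAlgebra R (FreeMonoid α)}
    (hD : ∀ l, D (word l) = deletionSum l) :
    (TensorProduct.assoc R _ _ _).toLinearMap ∘ₗ map D LinearMap.id ∘ₗ D =
      map LinearMap.id D ∘ₗ D := by
  refine (MonoidAlgebra.basis _ R).ext fun g => ?_
  have hg : MonoidAlgebra.basis _ R g = word g.toList := rfl
  simp only [LinearMap.comp_apply, LinearEquiv.coe_coe, hg, hD]
  set l := g.toList
  calc _ = ∑ i ∈ range l.length, ∑ j ∈ range i,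
          word (l.take j) ⊗ₜ (word ((l.take i).drop (j + 1)) ⊗ₜ word (l.drop (i + 1))) := by
        rw [deletionSum, map_sum, map_sum]
        refine sum_congr rfl fun i hi => ?_
        rw [map_tmul, LinearMap.id_apply, hD, deletionSum_take (mem_range.mp hi).le, sum_tmul,
          map_sum]
        simp only [assoc_tmul]
    _ = ∑ j ∈ range l.length, ∑ i ∈ Ico (j + 1) l.length,
          word (l.take j) ⊗ₜ (word ((l.take i).drop (j + 1)) ⊗ₜ word (l.drop (i + 1))) :=
        sum_comm' fun i j => by simp only [mem_range, mem_Ico]; omega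
    _ = _ := by
        rw [deletionSum, map_sum]
        refine sum_congr rfl fun j _ => ?_
        rw [map_tmul, LinearMap.id_apply, hD, deletionSum_drop, tmul_sum]

end FreeMonoidAlgebra

theorem IsNewtonian.apply_word_eq_deletionSum {R α : Type*} [CommRing R]
    {D : MonoidAlgebra R (FreeMonoid α) →ₗ[R]
      MonoidAlgebra R (FreeMonoid α) ⊗[R] MonoidAlgebra R (FreeMonoid α)}
    (hD : IsNewtonian D) (hletter : ∀ x : α, D (word [x]) = 1 ⊗ₜ 1) (l : List α) :
    D (word l) = deletionSum l := by
  induction l with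
  | nil => rw [word_nil, hD.map_one_eq_zero]; rfl
  | cons x l ih =>
    rw [← List.singleton_append, word_append, hD, hletter, ih, Algebra.TensorProduct.tmul_mul_tmul,
      one_mul, one_mul]
    exact (deletionSum_cons x l).symm

theorem newtonian_coproduct_deletion_and_coassoc_general
    (D : AB →ₗ[ℤ] AB ⊗[ℤ] AB)
    (ha : D aV = 1 ⊗ₜ[ℤ] 1) (hb : D bV = 1 ⊗ₜ[ℤ] 1)
    (hnewton : ∀ u v : AB, D (u * v) = D u * (1 ⊗ₜ[ℤ] v) + (u ⊗ₜ[ℤ] 1) * D v) :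
    (∀ l : List Bool,
      D (MonoidAlgebra.single (FreeMonoid.ofList l) 1) =
        ∑ i ∈ Finset.range l.length,
          (MonoidAlgebra.single (FreeMonoid.ofList (l.take i)) (1 : ℤ)) ⊗ₜ[ℤ]
            (MonoidAlgebra.single (FreeMonoid.ofList (l.drop (i + 1))) (1 : ℤ))) ∧
    (∀ w : AB,
      (TensorProduct.assoc ℤ AB AB AB) ((TensorProduct.map D LinearMap.id) (D w)) =
        (TensorProduct.map LinearMap.id D) (D w)) := by
  have hword : ∀ l : List Bool, D (word l) = deletionSum l :=
    IsNewtonian.apply_word_eq_deletionSum hnewton fun x => x.casesOn ha hb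
  exact ⟨hword, LinearMap.congr_fun (coassoc_of_apply_word_eq_deletionSum hword)⟩

/-- A linear coproduct on `ℤ⟨a,b⟩` satisfying `Δ(1) = 0`, `Δ(a) = Δ(b) = 1 ⊗ 1` and
the Newtonian condition `Δ(uv) = ∑ u₍₁₎ ⊗ u₍₂₎v + ∑ uv₍₁₎ ⊗ v₍₂₎` is given on an
`ab`-monomial `u = u₁⋯uₙ` by `Δ(u) = ∑ᵢ u₁⋯u_{i-1} ⊗ u_{i+1}⋯uₙ`, and it is
coassociative. -/
theorem newtonian_coproduct_deletion_and_coassoc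
    (D : AB →ₗ[ℤ] AB ⊗[ℤ] AB)
    (h1 : D 1 = 0) (ha : D aV = 1 ⊗ₜ[ℤ] 1) (hb : D bV = 1 ⊗ₜ[ℤ] 1)
    (hnewton : ∀ u v : AB, D (u * v) = D u * (1 ⊗ₜ[ℤ] v) + (u ⊗ₜ[ℤ] 1) * D v) :
    (∀ l : List Bool,
      D (MonoidAlgebra.single (FreeMonoid.ofList l) 1) =
        ∑ i ∈ Finset.range l.length,
          (MonoidAlgebra.single (FreeMonoid.ofList (l.take i)) (1 : ℤ)) ⊗ₜ[ℤ]
            (MonoidAlgebra.single (FreeMonoid.ofList (l.drop (i + 1))) (1 : ℤ))) ∧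
    (∀ w : AB,
      (TensorProduct.assoc ℤ AB AB AB) ((TensorProduct.map D LinearMap.id) (D w)) =
        (TensorProduct.map LinearMap.id D) (D w)) :=
  newtonian_coproduct_deletion_and_coassoc_general D ha hb hnewton
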